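/- Let 0 < α < 1/2 and β > 0, and let f be the probability density function of the power Lindley distribution PL(α, β). Define h₃(x) = ( sin(β x^α tan(πα) − πα) + x^α sin(β x^α tan(πα) − 2πα) ) / (1 + x^α) for x > 0 and h₃(x) = 0 for x ≤ 0. Then ∫_0^∞ x^k f(x) h₃(x) dx = 0 for every nonnegative integer k. -/

import Mathlib

/-!
Substituting `u = x ^ α` turns the `k`-th moment of `f h₃` into a multiple of
`∫₀^∞ e^{-βu} (u^s sin(βu tan θ - θ) + u^(s+1) sin(βu tan θ - 2θ)) du`, where `θ = πα` and
`s = k / α`. As `sθ = kπ`, each term is `±∫₀^∞ u^σ e^{-βu} sin(βu tan θ - (σ+1)θ) du`, the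
imaginary part of `e^{-i(σ+1)θ} ∫₀^∞ u^σ e^{-pu} du` with `p = β - iβ tan θ = (β / cos θ) e^{-iθ}`.
The Laplace transform `∫₀^∞ u^σ e^{-pu} du = Γ(σ+1) p^{-(σ+1)}`, extended from real to complex `p`
by analytic continuation, makes that product real, so every moment vanishes.
-/

open Real MeasureTheory Set Filter Topology

lemma integrableOn_rpow_mul_exp_neg_mul {s b : ℝ} (hs : -1 < s) (hb : 0 < b) :
    IntegrableOn (fun x : ℝ => x ^ s * exp (-(b * x))) (Ioi 0) := by
  simpa using integrableOn_rpow_mul_exp_neg_mul_rpow hs zero_lt_one hb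

lemma norm_cpow_mul_cexp_neg_mul (a p : ℂ) {t : ℝ} (ht : 0 < t) :
    ‖(t : ℂ) ^ a * Complex.exp (-(p * t))‖ = t ^ a.re * exp (-(p.re * t)) := by
  rw [norm_mul, Complex.norm_cpow_eq_rpow_re_of_pos ht, Complex.norm_exp]
  simp

lemma measurable_cpow_mul_cexp_neg_mul (a p : ℂ) :
    Measurable fun t : ℝ => (t : ℂ) ^ a * Complex.exp (-(p * t)) := by
  fun_prop

lemma integrableOn_cpow_mul_cexp_neg_mul {a p : ℂ} (ha : -1 < a.re) (hp : 0 < p.re) :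
    IntegrableOn (fun t : ℝ => (t : ℂ) ^ a * Complex.exp (-(p * t))) (Ioi 0) := by
  refine Integrable.mono' (integrableOn_rpow_mul_exp_neg_mul ha hp)
    (measurable_cpow_mul_cexp_neg_mul a p).aestronglyMeasurable ?_
  filter_upwards [self_mem_ae_restrict measurableSet_Ioi] with t ht
  exact (norm_cpow_mul_cexp_neg_mul a p ht).le

lemma differentiableOn_integral_cpow_mul_cexp_neg_mul {a : ℂ} (ha : -1 < a.re) :
    DifferentiableOn ℂ (fun p : ℂ => ∫ t in Ioi (0 : ℝ), (t : ℂ) ^ a * Complex.exp (-(p * t)))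
      {p | 0 < p.re} := by
  intro p₀ (hp₀ : 0 < p₀.re)
  have hδ : 0 < p₀.re / 2 := half_pos hp₀
  have hre : ∀ p ∈ Metric.ball p₀ (p₀.re / 2), p₀.re / 2 < p.re := fun p hp => by
    have := (Complex.abs_re_le_norm (p - p₀)).trans_lt (mem_ball_iff_norm.mp hp)
    rw [Complex.sub_re] at this
    linarith [neg_abs_le (p.re - p₀.re)]
  -- `t ^ (a.re + 1) * exp (-(p₀.re / 2 * t))` dominates the `p`-derivative on the ball
  refine (hasDerivAt_integral_of_dominated_loc_of_deriv_le (Metric.ball_mem_nhds p₀ hδ)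
    (F' := fun p t => (t : ℂ) ^ a * Complex.exp (-(p * t)) * -t)
    (Eventually.of_forall fun p => (measurable_cpow_mul_cexp_neg_mul a p).aestronglyMeasurable)
    (integrableOn_cpow_mul_cexp_neg_mul ha hp₀)
    ((measurable_cpow_mul_cexp_neg_mul a p₀).mul
      (by fun_prop : Measurable fun t : ℝ => -(t : ℂ))).aestronglyMeasurable
    ?_ (integrableOn_rpow_mul_exp_neg_mul (by linarith : -1 < a.re + 1) hδ) ?_).2
    |>.differentiableAt.differentiableWithinAt
  · filter_upwards [self_mem_ae_restrict measurableSet_Ioi] with t (ht : 0 < t) p hp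
    rw [norm_mul, norm_cpow_mul_cexp_neg_mul a p ht, norm_neg, Complex.norm_real,
      norm_of_nonneg ht.le, rpow_add_one ht.ne', mul_right_comm]
    gcongr
    nlinarith [hre p hp]
  · refine Eventually.of_forall fun t p _ => ?_
    simpa [mul_assoc] using (((hasDerivAt_id p).mul_const (t : ℂ)).neg.cexp.const_mul ((t : ℂ) ^ a))

lemma integral_cpow_mul_cexp_neg_mul_Ioi {a p : ℂ} (ha : 0 < a.re) (hp : 0 < p.re) :
    ∫ t in Ioi (0 : ℝ), (t : ℂ) ^ (a - 1) * Complex.exp (-(p * t)) =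
      p ^ (-a) * Complex.Gamma a := by
  have hU : IsOpen {q : ℂ | 0 < q.re} := isOpen_lt continuous_const Complex.continuous_re
  have hlhs : AnalyticOnNhd ℂ
      (fun q : ℂ => ∫ t in Ioi (0 : ℝ), (t : ℂ) ^ (a - 1) * Complex.exp (-(q * t)))
      {q | 0 < q.re} :=
    (differentiableOn_integral_cpow_mul_cexp_neg_mul (by simpa using ha)).analyticOnNhd hU
  have hrhs : AnalyticOnNhd ℂ (fun q : ℂ => q ^ (-a) * Complex.Gamma a) {q | 0 < q.re} :=
    DifferentiableOn.analyticOnNhd (fun q (hq : 0 < q.re) =>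
      ((differentiableAt_id.cpow_const (Or.inl hq)).mul_const _).differentiableWithinAt) hU
  -- both sides agree on the positive real axis, which accumulates at `1`
  have hreal : ∀ r : ℝ, 0 < r →
      ∫ t in Ioi (0 : ℝ), (t : ℂ) ^ (a - 1) * Complex.exp (-(r * t)) =
        (r : ℂ) ^ (-a) * Complex.Gamma a := by
    intro r hr
    rw [Complex.integral_cpow_mul_exp_neg_mul_Ioi ha hr, one_div,
      Complex.inv_cpow _ _ (by simp [Complex.arg_ofReal_of_nonneg hr.le, pi_ne_zero.symm]),
      Complex.cpow_neg]
  have hfreq : ∃ᶠ q in 𝓝[≠] (1 : ℂ), (∫ t in Ioi (0 : ℝ), (t : ℂ) ^ (a - 1) *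
      Complex.exp (-(q * t))) = q ^ (-a) * Complex.Gamma a := by
    have hmap : Tendsto ((↑) : ℝ → ℂ) (𝓝[≠] 1) (𝓝[≠] 1) :=
      tendsto_nhdsWithin_of_tendsto_nhds_of_eventually_within _
        ((Complex.continuous_ofReal.tendsto' 1 1 Complex.ofReal_one).mono_left nhdsWithin_le_nhds)
        (eventually_nhdsWithin_of_forall fun r hr => by simpa using hr)
    refine hmap.frequently (Eventually.frequently ?_)
    filter_upwards [nhdsWithin_le_nhds (lt_mem_nhds one_pos)] with r hr using hreal r hr
  exact hlhs.eqOn_of_preconnected_of_frequently_eq hrhs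
    (convex_halfSpace_re_gt 0).isPreconnected (by simp) hfreq hp

lemma integral_rpow_mul_exp_neg_mul_mul_sin_eq_zero {s β θ : ℝ} (hs : -1 < s) (hβ : 0 < β)
    (hθ₁ : -(π / 2) < θ) (hθ₂ : θ < π / 2) :
    ∫ u in Ioi 0, u ^ s * exp (-(β * u)) * sin (β * u * tan θ - (s + 1) * θ) = 0 := by
  have hcos : 0 < cos θ := cos_pos_of_mem_Ioo ⟨hθ₁, hθ₂⟩
  set c := (s + 1) * θ
  -- `p = β - i β tan θ` in polar form `exp z`, with `arg p = -θ`
  set z : ℂ := (Real.log (β / cos θ) : ℂ) - θ * Complex.I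
  set p := Complex.exp z
  have hzre : z.re = Real.log (β / cos θ) := by simp [z]
  have hzim : z.im = -θ := by simp [z]
  have hpre : p.re = β := by
    rw [Complex.exp_re, hzre, hzim, exp_log (div_pos hβ hcos), cos_neg]
    field_simp
  have hpim : p.im = -(β * tan θ) := by
    rw [Complex.exp_im, hzre, hzim, exp_log (div_pos hβ hcos), sin_neg, tan_eq_sin_div_cos]
    ring
  have hp : p ^ (-((s + 1 : ℝ) : ℂ)) = Complex.exp (z * -((s + 1 : ℝ) : ℂ)) := by
    rw [Complex.cpow_def_of_ne_zero (Complex.exp_ne_zero z),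
      Complex.log_exp (by rw [hzim]; linarith) (by rw [hzim]; linarith)]
  have hint : Integrable (fun t : ℝ => Complex.exp (-(c * Complex.I)) *
      ((t : ℂ) ^ (((s + 1 : ℝ) : ℂ) - 1) * Complex.exp (-(p * t)))) (volume.restrict (Ioi 0)) :=
    (integrableOn_cpow_mul_cexp_neg_mul (by simpa using hs) (by rw [hpre]; exact hβ)).const_mul _
  calc ∫ u in Ioi 0, u ^ s * exp (-(β * u)) * sin (β * u * tan θ - c)
      = ∫ t in Ioi (0 : ℝ), (Complex.exp (-(c * Complex.I)) *
          ((t : ℂ) ^ (((s + 1 : ℝ) : ℂ) - 1) * Complex.exp (-(p * t)))).im := by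
        refine setIntegral_congr_fun measurableSet_Ioi fun t (ht : 0 < t) => ?_
        rw [show ((s + 1 : ℝ) : ℂ) - 1 = (s : ℂ) by push_cast; ring,
          ← Complex.ofReal_cpow ht.le, mul_left_comm, ← Complex.exp_add, Complex.im_ofReal_mul,
          Complex.exp_im]
        simp only [Complex.add_re, Complex.neg_re, Complex.mul_re, Complex.ofReal_re, Complex.I_re,
          mul_zero, Complex.ofReal_im, Complex.I_im, mul_one, sub_self, neg_zero, hpre, hpim,
          sub_zero, zero_add, Complex.add_im, Complex.neg_im, Complex.mul_im, add_zero, neg_mul,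
          neg_neg]
        ring_nf
    _ = (Complex.exp (-(c * Complex.I)) *
          (p ^ (-((s + 1 : ℝ) : ℂ)) * Complex.Gamma ((s + 1 : ℝ) : ℂ))).im := by
        rw [← integral_cpow_mul_cexp_neg_mul_Ioi (by simp; linarith) (by rw [hpre]; exact hβ),
          ← integral_const_mul]
        exact integral_im hint
    _ = 0 := by
        -- the phase `-c` cancels `arg (p ^ (-(s + 1))) = (s + 1) θ`, leaving a real number
        rw [hp, ← mul_assoc, ← Complex.exp_add, Complex.Gamma_ofReal,
          show -(c * Complex.I) + z * -((s + 1 : ℝ) : ℂ)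
            = ((-(s + 1) * Real.log (β / cos θ) : ℝ) : ℂ) by simp [z, c]; ring,
          ← Complex.ofReal_exp, ← Complex.ofReal_mul, Complex.ofReal_im]

lemma integral_rpow_mul_exp_neg_mul_mul_sin_eq_zero_of_eq_add_int_mul_pi {s β θ φ : ℝ} (n : ℤ)
    (hs : -1 < s) (hβ : 0 < β) (hθ₁ : -(π / 2) < θ) (hθ₂ : θ < π / 2)
    (hφ : (s + 1) * θ = φ + n * π) :
    ∫ u in Ioi 0, u ^ s * exp (-(β * u)) * sin (β * u * tan θ - φ) = 0 := by
  have hsin : ∀ u : ℝ, sin (β * u * tan θ - φ) = (-1) ^ n * sin (β * u * tan θ - (s + 1) * θ) :=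
    fun u => by rw [← sin_add_int_mul_pi, hφ]; ring_nf
  simp_rw [hsin, mul_left_comm _ ((-1 : ℝ) ^ n), integral_const_mul,
    integral_rpow_mul_exp_neg_mul_mul_sin_eq_zero hs hβ hθ₁ hθ₂, mul_zero]

lemma integrableOn_rpow_mul_exp_neg_mul_mul_sin {s b : ℝ} (hs : -1 < s) (hb : 0 < b) {g : ℝ → ℝ}
    (hg : Measurable g) :
    IntegrableOn (fun u : ℝ => u ^ s * exp (-(b * u)) * sin (g u)) (Ioi 0) :=
  (integrableOn_rpow_mul_exp_neg_mul hs hb).mul_bdd (measurable_sin.comp hg).aestronglyMeasurable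
    (Eventually.of_forall fun _ => (norm_eq_abs _).trans_le (abs_sin_le_one _))

/-- For `0 < α < 1/2` and `β > 0`, the function
`h₃(x) = (sin(β x^α tan(πα) - πα) + x^α sin(β x^α tan(πα) - 2πα)) / (1 + x^α)`
(for `x > 0`, zero otherwise) has vanishing moments against the power Lindley density `f`:
`∫_0^∞ x^k f(x) h₃(x) dx = 0` for every nonnegative integer `k`. -/
theorem power_lindley_perturbation_three (α β : ℝ) (hα0 : 0 < α) (hα : α < 1 / 2)
    (hβ : 0 < β)
    (f h₃ : ℝ → ℝ)
    (hf : ∀ x : ℝ, f x = if 0 < x then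
      (α * β ^ 2 / (β + 1)) * (1 + x ^ α) * x ^ (α - 1) * Real.exp (-β * x ^ α) else 0)
    (hh : ∀ x : ℝ, h₃ x = if 0 < x then
      (Real.sin (β * x ^ α * Real.tan (π * α) - π * α) +
        x ^ α * Real.sin (β * x ^ α * Real.tan (π * α) - 2 * π * α)) / (1 + x ^ α) else 0) :
    ∀ k : ℕ, ∫ x in Set.Ioi (0 : ℝ), x ^ k * f x * h₃ x = 0 := by
  intro k
  set θ := π * α
  have hθ₁ : -(π / 2) < θ := by nlinarith [pi_pos]
  have hθ₂ : θ < π / 2 := by nlinarith [pi_pos]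
  set s : ℝ := k / α
  have hs : -1 < s := by linarith [show 0 ≤ s by positivity]
  have hsθ : s * θ = k * π := by simp only [s, θ]; field_simp
  set g : ℝ → ℝ := fun u => β ^ 2 / (β + 1) *
    (u ^ s * exp (-(β * u)) * sin (β * u * tan θ - θ) +
      u ^ (s + 1) * exp (-(β * u)) * sin (β * u * tan θ - 2 * θ))
  have hsubst : ∀ x ∈ Ioi (0 : ℝ), x ^ k * f x * h₃ x = (|α| * x ^ (α - 1)) • g (x ^ α) := by
    intro x (hx : 0 < x)
    have hxs : (x ^ α) ^ s = x ^ k := by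
      rw [← rpow_mul hx.le, mul_div_cancel₀ _ hα0.ne', rpow_natCast]
    rw [hf, hh, if_pos hx, if_pos hx, smul_eq_mul]
    simp only [g]
    rw [rpow_add_one (rpow_pos_of_pos hx α).ne', hxs,
      abs_of_pos hα0, neg_mul, show 2 * π * α = 2 * θ from mul_assoc 2 π α]
    field_simp
  rw [setIntegral_congr_fun measurableSet_Ioi hsubst, integral_comp_rpow_Ioi g hα0.ne',
    integral_const_mul, integral_add
      (integrableOn_rpow_mul_exp_neg_mul_mul_sin hs hβ (by fun_prop))
      (integrableOn_rpow_mul_exp_neg_mul_mul_sin (by linarith) hβ (by fun_prop)),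
    integral_rpow_mul_exp_neg_mul_mul_sin_eq_zero_of_eq_add_int_mul_pi k hs hβ hθ₁ hθ₂
      (by push_cast; linarith),
    integral_rpow_mul_exp_neg_mul_mul_sin_eq_zero_of_eq_add_int_mul_pi k (by linarith) hβ hθ₁ hθ₂
      (by push_cast; linarith)]
  simp
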